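/- arXiv:2601.13650 — 6 statements merged into one kernel-verified Lean document; each statement's English description precedes it below -/
import Mathlib

section
/- Let Ω be a measurable subset of ℝ^N and let h : ℝ^N → ℝ^N be injective on Ω and differentiable at every point of Ω, and set Ω' = h(Ω). Assume there is m > 0 such that |det Dh(x)| ≥ m for all x ∈ Ω, where Dh(x) denotes the Fréchet derivative of h at x. Then for every measurable function u : ℝ^N → ℝ that is square-integrable on Ω', the composition u ∘ h is square-integrable on Ω and ∫_Ω |u(h(x))|² dx ≤ m⁻¹ ∫_{Ω'} |u(y)|² dy. -/
open MeasureTheory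

/-- If `h` is injective and differentiable on a measurable set `Ω ⊆ ℝ^N` with
`|det Dh(x)| ≥ m > 0` on `Ω`, then for every measurable `u` that is square-integrable
on `Ω' = h(Ω)`, the composition `u ∘ h` is square-integrable on `Ω` and
`∫_Ω |u(h x)|² dx ≤ m⁻¹ ∫_{Ω'} |u y|² dy`. -/
theorem composition_L2_bound {N : ℕ}
    (Ω : Set (EuclideanSpace ℝ (Fin N))) (hΩ : MeasurableSet Ω)
    (h : EuclideanSpace ℝ (Fin N) → EuclideanSpace ℝ (Fin N))
    (hinj : Set.InjOn h Ω)
    (hdiff : ∀ x ∈ Ω, DifferentiableAt ℝ h x)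
    (m : ℝ) (hm : 0 < m)
    (hdet : ∀ x ∈ Ω, m ≤ |(fderiv ℝ h x).det|)
    (u : EuclideanSpace ℝ (Fin N) → ℝ) (hu : Measurable u)
    (hu2 : IntegrableOn (fun y => |u y| ^ 2) (h '' Ω)) :
    IntegrableOn (fun x => |u (h x)| ^ 2) Ω ∧
      ∫ x in Ω, |u (h x)| ^ 2 ≤ m⁻¹ * ∫ y in h '' Ω, |u y| ^ 2 := by
  have hfd : ∀ x ∈ Ω, HasFDerivWithinAt h (fderiv ℝ h x) Ω x :=
    fun x hx => (hdiff x hx).hasFDerivAt.hasFDerivWithinAt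
  have hint : IntegrableOn (fun x => |(fderiv ℝ h x).det| • |u (h x)| ^ 2) Ω :=
    (integrableOn_image_iff_integrableOn_abs_det_fderiv_smul volume hΩ hfd hinj
      (fun y => |u y| ^ 2)).mp hu2
  have hcont : ContinuousOn h Ω := fun x hx => (hdiff x hx).continuousAt.continuousWithinAt
  have hmeas : AEStronglyMeasurable (fun x => |u (h x)| ^ 2) (volume.restrict Ω) := by
    have : AEMeasurable h (volume.restrict Ω) := hcont.aemeasurable hΩ
    exact ((continuous_abs.pow 2).measurable.comp_aemeasurable
      (hu.comp_aemeasurable this)).aestronglyMeasurable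
  have hbound : ∀ᵐ x ∂(volume.restrict Ω),
      |u (h x)| ^ 2 ≤ m⁻¹ * (|(fderiv ℝ h x).det| • |u (h x)| ^ 2) := by
    filter_upwards [ae_restrict_mem hΩ] with x hx
    have h1 : m ≤ |(fderiv ℝ h x).det| := hdet x hx
    have h2 : (0:ℝ) ≤ |u (h x)| ^ 2 := by positivity
    have h3 : (1:ℝ) ≤ m⁻¹ * |(fderiv ℝ h x).det| := by
      rw [← inv_mul_cancel₀ hm.ne']
      exact mul_le_mul_of_nonneg_left h1 (by positivity)
    rw [smul_eq_mul, ← mul_assoc]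
    nlinarith [mul_le_mul_of_nonneg_right h3 h2]
  have hint2 : IntegrableOn (fun x => m⁻¹ * (|(fderiv ℝ h x).det| • |u (h x)| ^ 2)) Ω :=
    hint.const_mul _
  have hintc : IntegrableOn (fun x => |u (h x)| ^ 2) Ω := by
    refine hint2.mono' hmeas ?_
    filter_upwards [hbound] with x hx
    rw [Real.norm_eq_abs, abs_of_nonneg (by positivity)]
    exact hx
  refine ⟨hintc, ?_⟩
  have heq : ∫ y in h '' Ω, |u y| ^ 2 = ∫ x in Ω, |(fderiv ℝ h x).det| • |u (h x)| ^ 2 :=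
    integral_image_eq_integral_abs_det_fderiv_smul volume hΩ hfd hinj _
  rw [heq, ← integral_const_mul]
  exact integral_mono_ae hintc hint2 hbound
end

section
/- Let Ω be a measurable subset of ℝ^N, let h : ℝ^N → ℝ^N be injective on Ω and differentiable at every point of Ω with Ω' = h(Ω), and assume there are constants m > 0 and M ≥ 0 such that |det Dh(x)| ≥ m and ‖Dh(x)‖ ≤ M (operator norm) for all x ∈ Ω. Let u : ℝ^N → ℝ be differentiable at every point of Ω' with ∫_{Ω'} ‖Du(y)‖² dy < ∞. Then ∫_Ω ‖D(u ∘ h)(x)‖² dx ≤ (M²/m) ∫_{Ω'} ‖Du(y)‖² dy, where D denotes the Fréchet derivative and ‖·‖ the operator norm of a linear map. -/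
open MeasureTheory

/-- If `h` is injective and differentiable on a measurable set `Ω ⊆ ℝ^N` with
`|det Dh(x)| ≥ m > 0` and `‖Dh(x)‖ ≤ M` on `Ω`, and `u` is differentiable on `Ω' = h(Ω)`
with square-integrable derivative, then
`∫_Ω ‖D(u ∘ h)(x)‖² dx ≤ (M²/m) ∫_{Ω'} ‖Du(y)‖² dy`. -/
theorem composition_H1_seminorm_bound {N : ℕ}
    (Ω : Set (EuclideanSpace ℝ (Fin N))) (hΩ : MeasurableSet Ω)
    (h : EuclideanSpace ℝ (Fin N) → EuclideanSpace ℝ (Fin N))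
    (hinj : Set.InjOn h Ω)
    (hdiff : ∀ x ∈ Ω, DifferentiableAt ℝ h x)
    (m : ℝ) (hm : 0 < m)
    (M : ℝ) (hM : 0 ≤ M)
    (hdet : ∀ x ∈ Ω, m ≤ |(fderiv ℝ h x).det|)
    (hDh : ∀ x ∈ Ω, ‖fderiv ℝ h x‖ ≤ M)
    (u : EuclideanSpace ℝ (Fin N) → ℝ)
    (hud : ∀ y ∈ h '' Ω, DifferentiableAt ℝ u y)
    (hu2 : IntegrableOn (fun y => ‖fderiv ℝ u y‖ ^ 2) (h '' Ω)) :
    ∫ x in Ω, ‖fderiv ℝ (u ∘ h) x‖ ^ 2 ≤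
      (M ^ 2 / m) * ∫ y in h '' Ω, ‖fderiv ℝ u y‖ ^ 2 := by
  have hf' : ∀ x ∈ Ω, HasFDerivWithinAt h (fderiv ℝ h x) Ω x :=
    fun x hx => ((hdiff x hx).hasFDerivAt).hasFDerivWithinAt
  have hcov := integral_image_eq_integral_abs_det_fderiv_smul volume hΩ hf' hinj
    (fun y => ‖fderiv ℝ u y‖ ^ 2)
  have hint : IntegrableOn
      (fun x => |(fderiv ℝ h x).det| • ‖fderiv ℝ u (h x)‖ ^ 2) Ω :=
    (integrableOn_image_iff_integrableOn_abs_det_fderiv_smul volume hΩ hf' hinj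
      (fun y => ‖fderiv ℝ u y‖ ^ 2)).1 hu2
  have key : ∫ x in Ω, ‖fderiv ℝ (u ∘ h) x‖ ^ 2 ≤
      ∫ x in Ω, (M ^ 2 / m) * (|(fderiv ℝ h x).det| • ‖fderiv ℝ u (h x)‖ ^ 2) := by
    apply integral_mono_of_nonneg
    · filter_upwards with x using by positivity
    · exact hint.const_mul _
    · filter_upwards [ae_restrict_mem hΩ] with x hx
      have hcomp : fderiv ℝ (u ∘ h) x = (fderiv ℝ u (h x)).comp (fderiv ℝ h x) :=
        fderiv_comp x (hud (h x) ⟨x, hx, rfl⟩) (hdiff x hx)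
      have h1 : ‖fderiv ℝ (u ∘ h) x‖ ≤ M * ‖fderiv ℝ u (h x)‖ := by
        rw [hcomp]
        calc ‖(fderiv ℝ u (h x)).comp (fderiv ℝ h x)‖
            ≤ ‖fderiv ℝ u (h x)‖ * ‖fderiv ℝ h x‖ := ContinuousLinearMap.opNorm_comp_le _ _
          _ ≤ ‖fderiv ℝ u (h x)‖ * M := by
              exact mul_le_mul_of_nonneg_left (hDh x hx) (norm_nonneg _)
          _ = M * ‖fderiv ℝ u (h x)‖ := mul_comm _ _
      have h2 : ‖fderiv ℝ (u ∘ h) x‖ ^ 2 ≤ M ^ 2 * ‖fderiv ℝ u (h x)‖ ^ 2 := by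
        have := mul_self_le_mul_self (norm_nonneg _) h1
        nlinarith [norm_nonneg (fderiv ℝ (u ∘ h) x), norm_nonneg (fderiv ℝ u (h x))]
      have h3 : M ^ 2 ≤ (M ^ 2 / m) * |(fderiv ℝ h x).det| := by
        have := hdet x hx
        rw [div_mul_eq_mul_div, le_div_iff₀ hm]
        nlinarith
      calc ‖fderiv ℝ (u ∘ h) x‖ ^ 2 ≤ M ^ 2 * ‖fderiv ℝ u (h x)‖ ^ 2 := h2
        _ ≤ ((M ^ 2 / m) * |(fderiv ℝ h x).det|) * ‖fderiv ℝ u (h x)‖ ^ 2 :=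
            mul_le_mul_of_nonneg_right h3 (by positivity)
        _ = (M ^ 2 / m) * (|(fderiv ℝ h x).det| • ‖fderiv ℝ u (h x)‖ ^ 2) := by
            simp [smul_eq_mul, mul_assoc]
  calc ∫ x in Ω, ‖fderiv ℝ (u ∘ h) x‖ ^ 2
      ≤ ∫ x in Ω, (M ^ 2 / m) * (|(fderiv ℝ h x).det| • ‖fderiv ℝ u (h x)‖ ^ 2) := key
    _ = (M ^ 2 / m) * ∫ x in Ω, |(fderiv ℝ h x).det| • ‖fderiv ℝ u (h x)‖ ^ 2 :=
        integral_const_mul _ _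
    _ = (M ^ 2 / m) * ∫ y in h '' Ω, ‖fderiv ℝ u y‖ ^ 2 := by rw [hcov]
end

section
/- Let Ω be a measurable subset of ℝ^N, let h : ℝ^N → ℝ^N be injective on Ω and differentiable at every point of Ω with Ω' = h(Ω), and let 0 ≤ η < 1 be such that ||det Dh(x)| − 1| ≤ η for all x ∈ Ω. Then for every measurable u : ℝ^N → ℝ that is square-integrable on Ω', the function u ∘ h is square-integrable on Ω and |∫_Ω |u(h(x))|² dx − ∫_{Ω'} |u(y)|² dy| ≤ (η/(1−η)) ∫_{Ω'} |u(y)|² dy. -/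
open MeasureTheory

/-- If `h` is injective and differentiable on a measurable set `Ω ⊆ ℝ^N` with
`||det Dh(x)| − 1| ≤ η < 1` on `Ω`, then for every measurable `u` that is
square-integrable on `Ω' = h(Ω)`, the composition `u ∘ h` is square-integrable on `Ω` and
`|∫_Ω |u(h x)|² dx − ∫_{Ω'} |u y|² dy| ≤ (η/(1−η)) ∫_{Ω'} |u y|² dy`. -/
theorem composition_L2_almost_isometry {N : ℕ}
    (Ω : Set (EuclideanSpace ℝ (Fin N))) (hΩ : MeasurableSet Ω)
    (h : EuclideanSpace ℝ (Fin N) → EuclideanSpace ℝ (Fin N))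
    (hinj : Set.InjOn h Ω)
    (hdiff : ∀ x ∈ Ω, DifferentiableAt ℝ h x)
    (η : ℝ) (hη0 : 0 ≤ η) (hη1 : η < 1)
    (hdet : ∀ x ∈ Ω, |(|(fderiv ℝ h x).det|) - 1| ≤ η)
    (u : EuclideanSpace ℝ (Fin N) → ℝ) (hu : Measurable u)
    (hu2 : IntegrableOn (fun y => |u y| ^ 2) (h '' Ω)) :
    IntegrableOn (fun x => |u (h x)| ^ 2) Ω ∧
      |(∫ x in Ω, |u (h x)| ^ 2) - ∫ y in h '' Ω, |u y| ^ 2| ≤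
        (η / (1 - η)) * ∫ y in h '' Ω, |u y| ^ 2 := by
  have h1η : (0:ℝ) < 1 - η := by linarith
  set D : EuclideanSpace ℝ (Fin N) → ℝ := fun x => |(fderiv ℝ h x).det| with hD
  have hf' : ∀ x ∈ Ω, HasFDerivWithinAt h (fderiv ℝ h x) Ω x :=
    fun x hx => (hdiff x hx).hasFDerivAt.hasFDerivWithinAt
  -- bounds on D on Ω
  have hDlb : ∀ x ∈ Ω, 1 - η ≤ D x := fun x hx => by
    have := abs_le.1 (hdet x hx); linarith [this.1]
  have hDub : ∀ x ∈ Ω, D x ≤ 1 + η := fun x hx => by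
    have := abs_le.1 (hdet x hx); linarith [this.2]
  -- change of variables
  have hint : ∫ y in h '' Ω, |u y| ^ 2 = ∫ x in Ω, D x • |u (h x)| ^ 2 :=
    integral_image_eq_integral_abs_det_fderiv_smul volume hΩ hf' hinj _
  have hgD : IntegrableOn (fun x => D x • |u (h x)| ^ 2) Ω :=
    (integrableOn_image_iff_integrableOn_abs_det_fderiv_smul volume hΩ hf' hinj
      (fun y => |u y| ^ 2)).1 hu2
  -- D is measurable
  have hDmeas : Measurable D :=
    (continuous_abs.comp ContinuousLinearMap.continuous_det).measurable.comp
      (measurable_fderiv ℝ h)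
  -- a.e. strong measurability of u∘h squared on Ω
  have haesm : AEStronglyMeasurable (fun x => |u (h x)| ^ 2) (volume.restrict Ω) := by
    have : AEStronglyMeasurable (fun x => (D x)⁻¹ * (D x • |u (h x)| ^ 2))
        (volume.restrict Ω) :=
      (hDmeas.inv.aestronglyMeasurable).mul hgD.aestronglyMeasurable
    refine this.congr ?_
    filter_upwards [ae_restrict_mem hΩ] with x hx
    have hDpos : D x ≠ 0 := (lt_of_lt_of_le h1η (hDlb x hx)).ne'
    simp [smul_eq_mul, ← mul_assoc, inv_mul_cancel₀ hDpos]
  -- integrability of u∘h squared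
  have hintOn : IntegrableOn (fun x => |u (h x)| ^ 2) Ω := by
    refine Integrable.mono' (hgD.smul ((1 - η)⁻¹)) haesm ?_
    filter_upwards [ae_restrict_mem hΩ] with x hx
    have hDx := hDlb x hx
    have hnn : (0:ℝ) ≤ |u (h x)| ^ 2 := by positivity
    rw [Real.norm_eq_abs, abs_of_nonneg hnn]
    have : (1 - η) * |u (h x)| ^ 2 ≤ D x * |u (h x)| ^ 2 :=
      mul_le_mul_of_nonneg_right hDx hnn
    simp only [Pi.smul_apply, smul_eq_mul]
    rw [← mul_le_mul_iff_right₀ h1η, ← mul_assoc, mul_inv_cancel₀ h1η.ne', one_mul]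
    exact this
  refine ⟨hintOn, ?_⟩
  rw [hint]
  -- the key estimate
  have h1 : |(∫ x in Ω, |u (h x)| ^ 2) - ∫ x in Ω, D x • |u (h x)| ^ 2| ≤
      η * ∫ x in Ω, |u (h x)| ^ 2 := by
    rw [← integral_sub hintOn hgD]
    calc |∫ x in Ω, (|u (h x)| ^ 2 - D x • |u (h x)| ^ 2)|
        ≤ ∫ x in Ω, |(|u (h x)| ^ 2 - D x • |u (h x)| ^ 2)| :=
          by simpa only [Real.norm_eq_abs] using
            norm_integral_le_integral_norm (μ := volume.restrict Ω)
              (fun x => |u (h x)| ^ 2 - D x • |u (h x)| ^ 2)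
      _ ≤ ∫ x in Ω, η * |u (h x)| ^ 2 := by
          refine setIntegral_mono_on (hintOn.sub hgD).abs (hintOn.smul η) hΩ ?_
          intro x hx
          have hnn : (0:ℝ) ≤ |u (h x)| ^ 2 := by positivity
          have : |u (h x)| ^ 2 - D x • |u (h x)| ^ 2 = (1 - D x) * |u (h x)| ^ 2 := by
            simp [smul_eq_mul]; ring
          rw [this, abs_mul, abs_of_nonneg hnn]
          exact mul_le_mul_of_nonneg_right (by rw [abs_sub_comm]; exact hdet x hx) hnn
      _ = η * ∫ x in Ω, |u (h x)| ^ 2 := integral_const_mul η _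
  have h2 : ∫ x in Ω, |u (h x)| ^ 2 ≤ (1 - η)⁻¹ * ∫ x in Ω, D x • |u (h x)| ^ 2 := by
    rw [← integral_const_mul]
    refine setIntegral_mono_on hintOn (hgD.smul ((1 - η)⁻¹)) hΩ ?_
    intro x hx
    have hDx := hDlb x hx
    have hnn : (0:ℝ) ≤ |u (h x)| ^ 2 := by positivity
    rw [smul_eq_mul, ← mul_assoc, ← mul_le_mul_iff_right₀ h1η, ← mul_assoc, ← mul_assoc,
      mul_inv_cancel₀ (ne_of_gt h1η), one_mul]
    exact mul_le_mul_of_nonneg_right hDx hnn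
  calc |(∫ x in Ω, |u (h x)| ^ 2) - ∫ x in Ω, D x • |u (h x)| ^ 2|
      ≤ η * ∫ x in Ω, |u (h x)| ^ 2 := h1
    _ ≤ η * ((1 - η)⁻¹ * ∫ x in Ω, D x • |u (h x)| ^ 2) :=
        mul_le_mul_of_nonneg_left h2 hη0
    _ = (η / (1 - η)) * ∫ x in Ω, D x • |u (h x)| ^ 2 := by ring
end

section
/- Let (A, d_A) and (X₀, d₀) be metric spaces, let ε > 0, and suppose: T : A × [0,1] → A is a map with T(x,0) = x for all x ∈ A; T₀ : X₀ × [0,1] → X₀ is continuous with T₀(y,0) = y for all y ∈ X₀ and there is L ≥ 0 with d₀(T₀(y,t), T₀(y',t)) ≤ L·d₀(y,y') for all y, y' ∈ X₀ and t ∈ [0,1]; I : A → X₀ is an (ε/6)-immersion whose image I(A) has compact closure in X₀; and d₀(I(T(x,s)), T₀(I(x), s)) < ε/6 for all x ∈ A and s ∈ [0,1]. Then there exists γ ∈ (0,1] such that d_A(T(x,s), x) < ε/2 for all x ∈ A and all s ∈ [0,γ]. -/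
/-- Transfer of uniform small-time continuity from a reference semiflow `T₀` on `X₀`
back through an `(ε/6)`-immersion `I : A → X₀` (with relatively compact image, and
`(ε/6)`-approximately intertwining the flows) to the perturbed semiflow `T` on `A`:
there is `γ ∈ (0,1]` with `d(T(x,s), x) < ε/2` for all `x ∈ A` and `s ∈ [0,γ]`. -/
theorem small_time_continuity_transfer {A X₀ : Type*} [MetricSpace A] [MetricSpace X₀]
    (ε : ℝ) (hε : 0 < ε)
    (T : A × unitInterval → A) (hT0 : ∀ x : A, T (x, 0) = x)
    (T₀ : X₀ × unitInterval → X₀) (hT₀c : Continuous T₀)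
    (hT₀0 : ∀ y : X₀, T₀ (y, 0) = y)
    (L : ℝ) (hL : 0 ≤ L)
    (hLip : ∀ (y y' : X₀) (t : unitInterval), dist (T₀ (y, t)) (T₀ (y', t)) ≤ L * dist y y')
    (I : A → X₀)
    (hImm : ∀ x x' : A, |dist x x' - dist (I x) (I x')| < ε / 6)
    (hIcomp : IsCompact (closure (Set.range I)))
    (hconj : ∀ (x : A) (s : unitInterval), dist (I (T (x, s))) (T₀ (I x, s)) < ε / 6) :
    ∃ γ : ℝ, 0 < γ ∧ γ ≤ 1 ∧
      ∀ (x : A) (s : unitInterval), (s : ℝ) ≤ γ → dist (T (x, s)) x < ε / 2 := by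
  set K := closure (Set.range I)
  set g : X₀ × unitInterval → ℝ := fun p => dist (T₀ p) p.1 with hg
  have hgc : Continuous g := hT₀c.dist continuous_fst
  set U : Set (X₀ × unitInterval) := {p | g p < ε / 6} with hU
  have hUo : IsOpen U := isOpen_lt hgc continuous_const
  have hsub : K ×ˢ ({0} : Set unitInterval) ⊆ U := by
    rintro ⟨y, s⟩ ⟨-, hs⟩
    simp only [Set.mem_singleton_iff] at hs
    subst hs
    simp only [hU, hg, Set.mem_setOf_eq, hT₀0 y, dist_self]
    positivity
  obtain ⟨V, W, hVo, hWo, hKV, hW0, hVW⟩ :=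
    generalized_tube_lemma hIcomp isCompact_singleton hUo hsub
  have h0W : (0 : unitInterval) ∈ W := hW0 rfl
  obtain ⟨r, hr, hball⟩ := Metric.isOpen_iff.mp hWo 0 h0W
  refine ⟨min (r / 2) 1, lt_min (by linarith) one_pos, min_le_right _ _, ?_⟩
  intro x s hs
  have hsW : s ∈ W := by
    apply hball
    have hs0 : (0 : ℝ) ≤ (s : ℝ) := s.2.1
    have : (s : ℝ) < r := lt_of_le_of_lt (hs.trans (min_le_left _ _)) (by linarith)
    simpa [Subtype.dist_eq, abs_of_nonneg hs0] using this
  have hxV : I x ∈ V := hKV (subset_closure ⟨x, rfl⟩)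
  have hglt : dist (T₀ (I x, s)) (I x) < ε / 6 := hVW ⟨hxV, hsW⟩
  have h1 : dist (T (x, s)) x < dist (I (T (x, s))) (I x) + ε / 6 := by
    have := hImm (T (x, s)) x
    rw [abs_lt] at this
    linarith [this.2]
  have h2 : dist (I (T (x, s))) (I x) ≤
      dist (I (T (x, s))) (T₀ (I x, s)) + dist (T₀ (I x, s)) (I x) := dist_triangle _ _ _
  linarith [hconj x s]
end

section
/- Let X be a metric space and T : X × [0,∞) → X a continuous map with T(x,0) = x and T(T(x,s),t) = T(x,s+t) for all x ∈ X and s,t ≥ 0. Let A ⊆ X be a nonempty compact set such that for every t ≥ 0 the map x ↦ T(x,t) maps A bijectively onto A (it is invariant and injective on A). Then there exists a continuous map φ : A × ℝ → A such that φ(x,0) = x for all x ∈ A, φ(φ(x,s),t) = φ(x,s+t) for all x ∈ A and s,t ∈ ℝ, and φ(x,t) = T(x,t) for all x ∈ A and t ≥ 0. -/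
/-- A semiflow `T` on a metric space `X` that maps a nonempty compact set `A` bijectively
onto itself at every time restricts (and extends) to a genuine two-sided dynamical system
`φ : A × ℝ → A` agreeing with `T` for nonnegative times. -/
theorem semiflow_extends_to_flow_on_invariant_compact {X : Type*} [MetricSpace X]
    (T : X × NNReal → X) (hTc : Continuous T)
    (hT0 : ∀ x : X, T (x, 0) = x)
    (hTadd : ∀ (x : X) (s t : NNReal), T (T (x, s), t) = T (x, s + t))
    (A : Set X) (hAne : A.Nonempty) (hAcomp : IsCompact A)
    (hbij : ∀ t : NNReal, Set.BijOn (fun x => T (x, t)) A A) :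
    ∃ φ : A × ℝ → A, Continuous φ ∧
      (∀ x : A, φ (x, 0) = x) ∧
      (∀ (x : A) (s t : ℝ), φ (φ (x, s), t) = φ (x, s + t)) ∧
      (∀ (x : A) (t : NNReal), (φ (x, (t : ℝ)) : X) = T ((x : X), t)) := by
  haveI : CompactSpace A := isCompact_iff_compactSpace.mp hAcomp
  -- the forward semiflow restricted to A
  set f : A × NNReal → A := fun p => ⟨T (p.1, p.2), (hbij p.2).mapsTo p.1.2⟩ with hf
  have hfc : Continuous f := by
    apply Continuous.subtype_mk
    exact hTc.comp ((continuous_subtype_val.comp continuous_fst).prodMk continuous_snd)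
  have hfadd : ∀ (x : A) (s t : NNReal), f (f (x, s), t) = f (x, s + t) := by
    intro x s t; exact Subtype.ext (hTadd x s t)
  have hf0 : ∀ x : A, f (x, 0) = x := fun x => Subtype.ext (hT0 x)
  -- f (·, t) is bijective on A
  have hinj : ∀ t : NNReal, Function.Injective (fun x : A => f (x, t)) := by
    intro t x y hxy
    exact Subtype.ext ((hbij t).injOn x.2 y.2 (congrArg Subtype.val hxy))
  have hsurj : ∀ t : NNReal, Function.Surjective (fun x : A => f (x, t)) := by
    intro t y
    obtain ⟨x, hx, hxe⟩ := (hbij t).surjOn y.2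
    exact ⟨⟨x, hx⟩, Subtype.ext hxe⟩
  -- the map H (x, t) = (f (x,t), t) is a proper continuous bijection, hence a homeomorphism
  set H : A × NNReal → A × NNReal := fun p => (f p, p.2) with hH
  have hHc : Continuous H := hfc.prodMk continuous_snd
  have hHbij : Function.Bijective H := by
    constructor
    · rintro ⟨x, s⟩ ⟨y, t⟩ h
      have h2 : s = t := congrArg Prod.snd h
      subst h2
      exact Prod.ext (hinj s (congrArg Prod.fst h)) rfl
    · rintro ⟨y, t⟩
      obtain ⟨x, hx⟩ := hsurj t y
      exact ⟨(x, t), Prod.ext hx rfl⟩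
  have hHproper : IsProperMap H := by
    rw [isProperMap_iff_isCompact_preimage]
    refine ⟨hHc, fun K hK => ?_⟩
    have hsub : H ⁻¹' K ⊆ Set.univ ×ˢ (Prod.snd '' K) := by
      rintro ⟨x, t⟩ hxt
      exact ⟨trivial, ⟨H (x, t), hxt, rfl⟩⟩
    exact IsCompact.of_isClosed_subset
      (isCompact_univ.prod (hK.image continuous_snd))
      (hK.isClosed.preimage hHc) hsub
  have hHopen : IsOpenMap H := by
    intro U hU
    have := hHproper.isClosedMap Uᶜ hU.isClosed_compl
    rwa [Set.image_compl_eq hHbij, isClosed_compl_iff] at this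
  set E : (A × NNReal) ≃ₜ (A × NNReal) :=
    Equiv.toHomeomorphOfContinuousOpen (Equiv.ofBijective H hHbij) hHc hHopen with hE
  -- the backwards flow g
  set g : A × NNReal → A := fun p => (E.symm p).1 with hg
  have hgc : Continuous g := continuous_fst.comp E.symm.continuous
  have hEsnd : ∀ p : A × NNReal, (E.symm p).2 = p.2 := by
    intro p
    calc (E.symm p).2 = (E (E.symm p)).2 := rfl
      _ = p.2 := congrArg Prod.snd (E.apply_symm_apply p)
  have hfg : ∀ (x : A) (t : NNReal), f (g (x, t), t) = x := by
    intro x t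
    have h1 := E.apply_symm_apply (x, t)
    have h2 : E.symm (x, t) = (g (x, t), t) := Prod.ext rfl (hEsnd (x, t))
    have : H (g (x, t), t) = (x, t) := by rw [← h2]; exact h1
    exact congrArg Prod.fst this
  have hgf : ∀ (x : A) (t : NNReal), g (f (x, t), t) = x := by
    intro x t
    have h1 := E.symm_apply_apply (x, t)
    exact congrArg Prod.fst h1
  -- injectivity restated
  have hinj' : ∀ (t : NNReal) (x y : A), f (x, t) = f (y, t) → x = y := fun t x y h => hinj t h
  -- commutation of f's
  have hfcomm : ∀ (x : A) (s t : NNReal), f (f (x, s), t) = f (f (x, t), s) := by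
    intro x s t; rw [hfadd, hfadd, add_comm]
  -- g commutes with f
  have hgfcomm : ∀ (x : A) (a c : NNReal), g (f (x, a), c) = f (g (x, c), a) := by
    intro x a c
    apply hinj' c
    rw [hfg, hfcomm, hfg]
  -- g is additive
  have hgadd : ∀ (x : A) (s t : NNReal), g (g (x, s), t) = g (x, s + t) := by
    intro x s t
    apply hinj' (s + t)
    rw [hfg]
    calc f (g (g (x, s), t), s + t) = f (f (g (g (x, s), t), t), s) := by
            rw [hfadd, add_comm]
      _ = f (g (x, s), s) := by rw [hfg]
      _ = x := hfg _ _
  -- key representation lemma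
  have hkey : ∀ (x : A) (a b c d : NNReal), a + d = b + c →
      f (g (x, b), a) = f (g (x, d), c) := by
    intro x a b c d habcd
    apply hinj' (b + d)
    have e1 : f (f (g (x, b), a), b + d) = f (x, a + d) := by
      calc f (f (g (x, b), a), b + d) = f (g (x, b), a + (b + d)) := hfadd _ _ _
        _ = f (f (g (x, b), b), a + d) := by rw [hfadd]; ring_nf
        _ = f (x, a + d) := by rw [hfg]
    have e2 : f (f (g (x, d), c), b + d) = f (x, b + c) := by
      calc f (f (g (x, d), c), b + d) = f (g (x, d), c + (b + d)) := hfadd _ _ _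
        _ = f (f (g (x, d), d), b + c) := by rw [hfadd]; ring_nf
        _ = f (x, b + c) := by rw [hfg]
    rw [e1, e2, habcd]
  -- define the flow
  refine ⟨fun p => f (g (p.1, Real.toNNReal (-p.2)), Real.toNNReal p.2), ?_, ?_, ?_, ?_⟩
  · apply hfc.comp
    apply Continuous.prodMk
    · apply hgc.comp
      exact continuous_fst.prodMk (continuous_real_toNNReal.comp continuous_snd.neg)
    · exact continuous_real_toNNReal.comp continuous_snd
  · intro x
    simp only [neg_zero, Real.toNNReal_zero]
    rw [hf0]
    apply hinj' 0
    rw [hfg, hf0]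
  · intro x s t
    simp only
    rw [hgfcomm, hfadd, hgadd]
    apply hkey
    have habs : ∀ r : ℝ, (Real.toNNReal r : ℝ) = (r + |r|) / 2 := by
      intro r
      rw [Real.coe_toNNReal']
      rcases le_total r 0 with h | h
      · rw [max_eq_right h, abs_of_nonpos h]; ring
      · rw [max_eq_left h, abs_of_nonneg h]; ring
    rw [← NNReal.coe_inj]
    simp only [NNReal.coe_add, habs, abs_neg]
    linarith
  · intro x t
    simp only
    have h1 : Real.toNNReal (t : ℝ) = t := Real.toNNReal_coe
    have h2 : Real.toNNReal (-(t : ℝ)) = 0 := Real.toNNReal_of_nonpos (by simp)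
    rw [h1, h2]
    have hg0 : g (x, 0) = x := by
      apply hinj' 0
      rw [hfg, hf0]
    rw [hg0]
end

section
/- Let Ω be a measurable subset of ℝ^N, let h : ℝ^N → ℝ^N be injective on Ω and twice differentiable at every point of Ω with Ω' = h(Ω), and assume there are constants m > 0 and M ≥ 0 such that |det Dh(x)| ≥ m, ‖Dh(x)‖ ≤ M and ‖D²h(x)‖ ≤ M for all x ∈ Ω (operator norms). Then there exists a constant C > 0, depending only on m and M, such that for every function u : ℝ^N → ℝ that is twice differentiable at every point of Ω' with ∫_{Ω'} ‖Du‖² dy < ∞ and ∫_{Ω'} ‖D²u‖² dy < ∞, one has ∫_Ω ‖D²(u ∘ h)(x)‖² dx ≤ C ( ∫_{Ω'} ‖D²u(y)‖² dy + ∫_{Ω'} ‖Du(y)‖² dy ). In fact C = 2·max(M⁴, M²)/m works. -/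
open MeasureTheory MeasureTheory.Measure Set Filter Metric Topology Pointwise

lemma fderiv_zero_of_density_one {N : ℕ} {F : Type*} [NormedAddCommGroup F] [NormedSpace ℝ F]
    {s : Set (EuclideanSpace ℝ (Fin N))} {f : EuclideanSpace ℝ (Fin N) → F}
    {f' : EuclideanSpace ℝ (Fin N) →L[ℝ] F} {x : EuclideanSpace ℝ (Fin N)}
    (hx : Tendsto (fun r => volume (s ∩ closedBall x r) / volume (closedBall x r)) (𝓝[>] 0) (𝓝 1))
    (xs : x ∈ s) (hf0 : ∀ y ∈ s, f y = 0) (hd : HasFDerivAt f f' x) : f' = 0 := by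
  ext1 z
  suffices H : ∀ ε : ℝ, 0 < ε → ‖f' z‖ ≤ ε * (‖z‖ + ε) + ‖f'‖ * ε by
    have hlim : Tendsto (fun ε : ℝ => ε * (‖z‖ + ε) + ‖f'‖ * ε) (𝓝[>] 0)
        (𝓝 (0 * (‖z‖ + 0) + ‖f'‖ * 0)) :=
      Tendsto.mono_left (Continuous.tendsto (by fun_prop) 0) nhdsWithin_le_nhds
    simp only [zero_mul, mul_zero, add_zero] at hlim
    have : ‖f' z‖ ≤ 0 := by
      apply le_of_tendsto_of_tendsto tendsto_const_nhds hlim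
      filter_upwards [self_mem_nhdsWithin] with ε hε using H ε hε
    simpa using le_antisymm this (norm_nonneg _)
  intro ε εpos
  have B₁ : ∀ᶠ r in 𝓝[>] (0 : ℝ), (s ∩ ({x} + r • closedBall z ε)).Nonempty :=
    MeasureTheory.Measure.eventually_nonempty_inter_smul_of_density_one volume s x hx _ measurableSet_closedBall
      (measure_closedBall_pos volume z εpos).ne'
  obtain ⟨ρ, ρpos, hρ⟩ :
      ∃ ρ > 0, ball x ρ ⊆ {y | ‖f y - f x - f' (y - x)‖ ≤ ε * ‖y - x‖} :=
    Metric.mem_nhds_iff.1 (hd.isLittleO.def εpos)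
  have B₂ : ∀ᶠ r in 𝓝[>] (0 : ℝ), {x} + r • closedBall z ε ⊆ ball x ρ := by
    apply nhdsWithin_le_nhds
    exact eventually_singleton_add_smul_subset isBounded_closedBall (ball_mem_nhds x ρpos)
  obtain ⟨r, ⟨y, ys, hy⟩, rρ, rpos⟩ :
      ∃ r : ℝ, (s ∩ ({x} + r • closedBall z ε)).Nonempty ∧
        {x} + r • closedBall z ε ⊆ ball x ρ ∧ 0 < r :=
    (B₁.and (B₂.and self_mem_nhdsWithin)).exists
  obtain ⟨a, az, ya⟩ : ∃ a, a ∈ closedBall z ε ∧ y = x + r • a := by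
    simp only [mem_smul_set, image_add_left, mem_preimage, singleton_add] at hy
    rcases hy with ⟨a, az, ha⟩
    exact ⟨a, az, by simp only [ha, add_neg_cancel_left]⟩
  have norm_a : ‖a‖ ≤ ‖z‖ + ε := by
    have h2 : ‖a - z‖ ≤ ε := mem_closedBall_iff_norm.1 az
    have h3 : ‖a‖ - ‖z‖ ≤ ‖a - z‖ := norm_sub_norm_le a z
    linarith
  have I : r * ‖f' a‖ ≤ r * ε * (‖z‖ + ε) := by
    have h0 : ‖f y - f x - f' (y - x)‖ ≤ ε * ‖y - x‖ := hρ (rρ hy)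
    rw [hf0 y ys, hf0 x xs] at h0
    have h1 : ‖f' (y - x)‖ ≤ ε * ‖y - x‖ := by
      rwa [show (0:F) - 0 - f' (y - x) = -(f' (y - x)) by abel, norm_neg] at h0
    calc r * ‖f' a‖ = ‖f' (r • a)‖ := by
          simp [norm_smul, Real.norm_eq_abs, abs_of_nonneg rpos.le]
      _ = ‖f' (y - x)‖ := by rw [ya, show x + r • a - x = r • a by abel]
      _ ≤ ε * ‖y - x‖ := h1
      _ = r * ε * ‖a‖ := by
          simp only [ya, add_sub_cancel_left, norm_smul, Real.norm_eq_abs,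
            abs_of_nonneg rpos.le]; ring
      _ ≤ r * ε * (‖z‖ + ε) := by
          have : (0:ℝ) ≤ r * ε := mul_nonneg rpos.le εpos.le
          exact mul_le_mul_of_nonneg_left norm_a this
  have ha' : ‖f' a‖ ≤ ε * (‖z‖ + ε) := by
    rw [mul_assoc] at I
    exact (mul_le_mul_iff_right₀ rpos).1 I
  calc ‖f' z‖ = ‖f' a + f' (z - a)‖ := by congr 1; rw [map_sub]; abel
    _ ≤ ‖f' a‖ + ‖f' (z - a)‖ := norm_add_le _ _
    _ ≤ ε * (‖z‖ + ε) + ‖f'‖ * ‖z - a‖ := add_le_add ha' (f'.le_opNorm _)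
    _ ≤ ε * (‖z‖ + ε) + ‖f'‖ * ε := by
        rw [mem_closedBall_iff_norm'] at az
        gcongr

set_option maxHeartbeats 2000000 in
open ContinuousLinearMap in
/-- If `h` is injective and twice differentiable on a measurable set `Ω ⊆ ℝ^N` with
`|det Dh(x)| ≥ m > 0`, `‖Dh(x)‖ ≤ M` and `‖D²h(x)‖ ≤ M` on `Ω`, then with
`C = 2 * max (M⁴, M²) / m`, for every `u` twice differentiable on `Ω' = h(Ω)` whose first
and second derivatives are square-integrable on `Ω'`, one has
`∫_Ω ‖D²(u ∘ h)(x)‖² dx ≤ C (∫_{Ω'} ‖D²u‖² dy + ∫_{Ω'} ‖Du‖² dy)`. -/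
theorem composition_H2_seminorm_bound {N : ℕ}
    (Ω : Set (EuclideanSpace ℝ (Fin N))) (hΩ : MeasurableSet Ω)
    (h : EuclideanSpace ℝ (Fin N) → EuclideanSpace ℝ (Fin N))
    (hinj : Set.InjOn h Ω)
    (hdiff : ∀ x ∈ Ω, DifferentiableAt ℝ h x)
    (hdiff2 : ∀ x ∈ Ω, DifferentiableAt ℝ (fderiv ℝ h) x)
    (m : ℝ) (hm : 0 < m) (M : ℝ) (hM : 0 ≤ M)
    (hdet : ∀ x ∈ Ω, m ≤ |(fderiv ℝ h x).det|)
    (hDh : ∀ x ∈ Ω, ‖fderiv ℝ h x‖ ≤ M)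
    (hD2h : ∀ x ∈ Ω, ‖fderiv ℝ (fderiv ℝ h) x‖ ≤ M) :
    ∃ C : ℝ, C = 2 * max (M ^ 4) (M ^ 2) / m ∧
      ∀ u : EuclideanSpace ℝ (Fin N) → ℝ,
        (∀ y ∈ h '' Ω, DifferentiableAt ℝ u y) →
        (∀ y ∈ h '' Ω, DifferentiableAt ℝ (fderiv ℝ u) y) →
        IntegrableOn (fun y => ‖fderiv ℝ u y‖ ^ 2) (h '' Ω) →
        IntegrableOn (fun y => ‖fderiv ℝ (fderiv ℝ u) y‖ ^ 2) (h '' Ω) →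
        ∫ x in Ω, ‖fderiv ℝ (fderiv ℝ (u ∘ h)) x‖ ^ 2 ≤
          C * ((∫ y in h '' Ω, ‖fderiv ℝ (fderiv ℝ u) y‖ ^ 2) +
            ∫ y in h '' Ω, ‖fderiv ℝ u y‖ ^ 2) := by
  refine ⟨2 * max (M ^ 4) (M ^ 2) / m, rfl, ?_⟩
  intro u hu1 hu2 hInt1 hInt2
  set K : ℝ := 2 * max (M ^ 4) (M ^ 2) with hKdef
  have hmax0 : (0:ℝ) ≤ max (M ^ 4) (M ^ 2) := le_trans (sq_nonneg M) (by rw [sq]; exact le_max_right _ _)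
  have hK0 : 0 ≤ K := by rw [hKdef]; linarith
  set F : EuclideanSpace ℝ (Fin N) → ℝ :=
    fun y => ‖fderiv ℝ (fderiv ℝ u) y‖ ^ 2 + ‖fderiv ℝ u y‖ ^ 2 with hFdef
  have hFnonneg : ∀ y, 0 ≤ F y := fun y => by positivity
  have hder : ∀ x ∈ Ω, HasFDerivWithinAt h (fderiv ℝ h x) Ω x :=
    fun x hx => ((hdiff x hx).hasFDerivAt).hasFDerivWithinAt
  have hFint : IntegrableOn F (h '' Ω) := hInt2.add hInt1
  have hFdet : IntegrableOn (fun x => |(fderiv ℝ h x).det| • F (h x)) Ω :=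
    (integrableOn_image_iff_integrableOn_abs_det_fderiv_smul volume hΩ hder hinj F).1 hFint
  have hchange : ∫ y in h '' Ω, F y = ∫ x in Ω, |(fderiv ℝ h x).det| • F (h x) :=
    integral_image_eq_integral_abs_det_fderiv_smul volume hΩ hder hinj F
  have hdetmeas : Measurable fun x => |(fderiv ℝ h x).det| :=
    (ContinuousLinearMap.continuous_det.measurable.comp (measurable_fderiv ℝ h)).abs
  -- integrability of F ∘ h on Ω
  have hFcomp : IntegrableOn (fun x => F (h x)) Ω := by
    have hmeas : AEStronglyMeasurable (fun x => F (h x)) (volume.restrict Ω) := by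
      have h1 : AEStronglyMeasurable
          (fun x => |(fderiv ℝ h x).det|⁻¹ * (|(fderiv ℝ h x).det| • F (h x)))
          (volume.restrict Ω) :=
        (hdetmeas.inv.aestronglyMeasurable).mul hFdet.aestronglyMeasurable
      apply h1.congr
      filter_upwards [ae_restrict_mem hΩ] with x hx
      have hne : |(fderiv ℝ h x).det| ≠ 0 := ne_of_gt (lt_of_lt_of_le hm (hdet x hx))
      rw [smul_eq_mul, ← mul_assoc, inv_mul_cancel₀ hne, one_mul]
    apply Integrable.mono' (hFdet.const_mul m⁻¹) hmeas
    filter_upwards [ae_restrict_mem hΩ] with x hx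
    rw [Real.norm_eq_abs, abs_of_nonneg (hFnonneg _), smul_eq_mul, ← mul_assoc]
    have h1 : 1 ≤ m⁻¹ * |(fderiv ℝ h x).det| := by
      rw [← inv_mul_cancel₀ hm.ne']
      exact mul_le_mul_of_nonneg_left (hdet x hx) (by positivity)
    nlinarith [hFnonneg (h x)]
  -- the key pointwise a.e. bound
  have key : ∀ᵐ x ∂(volume.restrict Ω),
      ‖fderiv ℝ (fderiv ℝ (u ∘ h)) x‖ ^ 2 ≤ K * F (h x) := by
    filter_upwards [Besicovitch.ae_tendsto_measure_inter_div volume Ω, ae_restrict_mem hΩ]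
      with x hdens hxΩ
    have hKF : 0 ≤ K * F (h x) := mul_nonneg hK0 (hFnonneg _)
    by_cases hgd : DifferentiableAt ℝ (fderiv ℝ (u ∘ h)) x
    · -- differentiable case: identify the derivative
      have hc : HasFDerivAt (fun y => fderiv ℝ u (h y))
          ((fderiv ℝ (fderiv ℝ u) (h x)).comp (fderiv ℝ h x)) x :=
        ((hu2 (h x) (mem_image_of_mem h hxΩ)).hasFDerivAt).comp x ((hdiff x hxΩ).hasFDerivAt)
      have hd' : HasFDerivAt (fun y => fderiv ℝ h y) (fderiv ℝ (fderiv ℝ h) x) x :=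
        (hdiff2 x hxΩ).hasFDerivAt
      have hG := hc.clm_comp hd'
      have hEq : ∀ y ∈ Ω,
          fderiv ℝ (u ∘ h) y - (fderiv ℝ u (h y)).comp (fderiv ℝ h y) = 0 := by
        intro y hy
        rw [fderiv_comp y (hu1 (h y) (mem_image_of_mem h hy)) (hdiff y hy)]
        exact sub_self _
      have hzero := fderiv_zero_of_density_one hdens hxΩ hEq (hgd.hasFDerivAt.sub hG)
      have hfx := sub_eq_zero.1 hzero
      rw [hfx]
      set p := fderiv ℝ u (h x)
      set B := fderiv ℝ (fderiv ℝ u) (h x)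
      set H := fderiv ℝ h x
      set H2 := fderiv ℝ (fderiv ℝ h) x
      have hHM : ‖H‖ ≤ M := hDh x hxΩ
      have hH2M : ‖H2‖ ≤ M := hD2h x hxΩ
      have hnormA : ‖(compL ℝ (EuclideanSpace ℝ (Fin N)) (EuclideanSpace ℝ (Fin N)) ℝ p).comp H2 +
          ((compL ℝ (EuclideanSpace ℝ (Fin N)) (EuclideanSpace ℝ (Fin N)) ℝ).flip H).comp
            (B.comp H)‖ ≤ M ^ 2 * ‖B‖ + M * ‖p‖ := by
        have n1 : ‖(compL ℝ (EuclideanSpace ℝ (Fin N)) (EuclideanSpace ℝ (Fin N)) ℝ p).comp H2‖ ≤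
            ‖p‖ * M := by
          calc ‖(compL ℝ (EuclideanSpace ℝ (Fin N)) (EuclideanSpace ℝ (Fin N)) ℝ p).comp H2‖ ≤
              ‖compL ℝ (EuclideanSpace ℝ (Fin N)) (EuclideanSpace ℝ (Fin N)) ℝ p‖ * ‖H2‖ :=
                opNorm_comp_le _ _
            _ ≤ ‖p‖ * M := by
                have hp1 : ‖compL ℝ (EuclideanSpace ℝ (Fin N)) (EuclideanSpace ℝ (Fin N)) ℝ p‖ ≤
                    ‖p‖ := by
                  exact opNorm_le_bound _ (norm_nonneg _) (fun g => by simpa using opNorm_comp_le p g)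
                exact mul_le_mul hp1 hH2M (norm_nonneg H2) (norm_nonneg p)
        have n2 : ‖(((compL ℝ (EuclideanSpace ℝ (Fin N)) (EuclideanSpace ℝ (Fin N)) ℝ).flip H).comp
            (B.comp H))‖ ≤ M * (‖B‖ * M) := by
          calc ‖(((compL ℝ (EuclideanSpace ℝ (Fin N)) (EuclideanSpace ℝ (Fin N)) ℝ).flip H).comp
              (B.comp H))‖ ≤
              ‖(compL ℝ (EuclideanSpace ℝ (Fin N)) (EuclideanSpace ℝ (Fin N)) ℝ).flip H‖ *
                ‖B.comp H‖ := opNorm_comp_le _ _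
            _ ≤ M * (‖B‖ * M) := by
                have hf1 : ‖(compL ℝ (EuclideanSpace ℝ (Fin N)) (EuclideanSpace ℝ (Fin N)) ℝ).flip
                    H‖ ≤ M := by
                  exact le_trans (opNorm_le_bound _ (norm_nonneg _) (fun g => by
                    simpa [mul_comm] using opNorm_comp_le g H)) hHM
                have hf2 : ‖B.comp H‖ ≤ ‖B‖ * M := by
                  calc ‖B.comp H‖ ≤ ‖B‖ * ‖H‖ := opNorm_comp_le _ _
                    _ ≤ ‖B‖ * M := mul_le_mul_of_nonneg_left hHM (norm_nonneg B)
                exact mul_le_mul hf1 hf2 (norm_nonneg (B.comp H)) hM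
        calc ‖_ + _‖ ≤ _ + _ := norm_add_le _ _
          _ ≤ ‖p‖ * M + M * (‖B‖ * M) := add_le_add n1 n2
          _ = M ^ 2 * ‖B‖ + M * ‖p‖ := by ring
      have hsq : ‖(compL ℝ (EuclideanSpace ℝ (Fin N)) (EuclideanSpace ℝ (Fin N)) ℝ p).comp H2 +
          ((compL ℝ (EuclideanSpace ℝ (Fin N)) (EuclideanSpace ℝ (Fin N)) ℝ).flip H).comp
            (B.comp H)‖ ^ 2 ≤ (M ^ 2 * ‖B‖ + M * ‖p‖) ^ 2 :=
        pow_le_pow_left₀ (by positivity) hnormA 2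
      refine le_trans hsq ?_
      have h4 : M ^ 4 ≤ max (M ^ 4) (M ^ 2) := le_max_left _ _
      have h2 : M ^ 2 ≤ max (M ^ 4) (M ^ 2) := le_max_right _ _
      have hBp : F (h x) = ‖B‖ ^ 2 + ‖p‖ ^ 2 := rfl
      rw [hBp, hKdef]
      nlinarith [sq_nonneg (M ^ 2 * ‖B‖ - M * ‖p‖),
        mul_le_mul_of_nonneg_right h4 (sq_nonneg ‖B‖),
        mul_le_mul_of_nonneg_right h2 (sq_nonneg ‖p‖),
        norm_nonneg B, norm_nonneg p]
    · rw [fderiv_zero_of_not_differentiableAt hgd]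
      simpa [ContinuousLinearMap.opNorm_zero] using hKF
  -- integrability of the LHS integrand
  have hLHSmeas : AEStronglyMeasurable
      (fun x => ‖fderiv ℝ (fderiv ℝ (u ∘ h)) x‖ ^ 2) (volume.restrict Ω) :=
    ((measurable_fderiv ℝ (fderiv ℝ (u ∘ h))).norm.pow_const 2).aestronglyMeasurable
  have hLHSint : IntegrableOn (fun x => ‖fderiv ℝ (fderiv ℝ (u ∘ h)) x‖ ^ 2) Ω := by
    apply Integrable.mono' (hFcomp.const_mul K) hLHSmeas
    filter_upwards [key] with x hx
    rwa [Real.norm_eq_abs, abs_of_nonneg (by positivity)]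
  -- chain of inequalities
  have step1 : ∫ x in Ω, ‖fderiv ℝ (fderiv ℝ (u ∘ h)) x‖ ^ 2 ≤ ∫ x in Ω, K * F (h x) :=
    integral_mono_ae hLHSint (hFcomp.const_mul K) key
  have step2 : ∫ x in Ω, K * F (h x) = K * ∫ x in Ω, F (h x) := integral_const_mul K _
  have step3 : ∫ x in Ω, F (h x) ≤ m⁻¹ * ∫ x in Ω, |(fderiv ℝ h x).det| • F (h x) := by
    rw [← integral_const_mul]
    apply integral_mono_ae hFcomp (hFdet.const_mul m⁻¹)
    filter_upwards [ae_restrict_mem hΩ] with x hx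
    rw [smul_eq_mul, ← mul_assoc]
    have h1 : 1 ≤ m⁻¹ * |(fderiv ℝ h x).det| := by
      rw [← inv_mul_cancel₀ hm.ne']
      exact mul_le_mul_of_nonneg_left (hdet x hx) (by positivity)
    nlinarith [hFnonneg (h x)]
  have step4 : ∫ x in Ω, |(fderiv ℝ h x).det| • F (h x) =
      (∫ y in h '' Ω, ‖fderiv ℝ (fderiv ℝ u) y‖ ^ 2) + ∫ y in h '' Ω, ‖fderiv ℝ u y‖ ^ 2 := by
    rw [← hchange, hFdef]
    exact integral_add hInt2 hInt1
  have hdetF0 : 0 ≤ ∫ x in Ω, |(fderiv ℝ h x).det| • F (h x) := by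
    apply integral_nonneg
    intro x
    exact smul_nonneg (abs_nonneg _) (hFnonneg _)
  calc ∫ x in Ω, ‖fderiv ℝ (fderiv ℝ (u ∘ h)) x‖ ^ 2 ≤ K * ∫ x in Ω, F (h x) := by
        rw [← step2]; exact step1
    _ ≤ K * (m⁻¹ * ∫ x in Ω, |(fderiv ℝ h x).det| • F (h x)) :=
        mul_le_mul_of_nonneg_left step3 hK0
    _ = K / m * ((∫ y in h '' Ω, ‖fderiv ℝ (fderiv ℝ u) y‖ ^ 2) +
        ∫ y in h '' Ω, ‖fderiv ℝ u y‖ ^ 2) := by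
        rw [step4, div_eq_mul_inv, mul_assoc, hKdef]
        ring
end
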